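/- arXiv:2403.03085 — 4 statements merged into one kernel-verified Lean document; each statement's English description precedes it below -/
import Mathlib

section
/- In a generalised category with families (u, u̇, Σ ⊣ Δ), the left adjoint Σ is faithful; moreover for objects a, b of U̇, Σ induces a bijection between U̇(a,b) and the set of arrows f ∈ U(Σa, Σb) satisfying (Ση_b) ∘ f = (ΣΔf) ∘ (Ση_a). -/
open CategoryTheory

/-- An arrow `f : X ⟶ Y` in `E` is `p`-cartesian if every `g : Z ⟶ Y` whose image factors
through `p f` lifts uniquely. -/
def IsCartesian {E B : Type*} [Category E] [Category B] (p : E ⥤ B)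
    {X Y : E} (f : X ⟶ Y) : Prop :=
  ∀ ⦃Z : E⦄ (g : Z ⟶ Y) (h : p.obj Z ⟶ p.obj X),
    h ≫ p.map f = p.map g → ∃! l : Z ⟶ X, p.map l = h ∧ l ≫ f = g

/-- A functor `p : E ⥤ B` is a (Grothendieck) fibration if every arrow into the image of an
object of `E` has a cartesian lift. -/
def IsFibration {E B : Type*} [Category E] [Category B] (p : E ⥤ B) : Prop :=
  ∀ (Y : E) (X : B) (φ : X ⟶ p.obj Y),
    ∃ (Z : E) (f : Z ⟶ Y) (e : p.obj Z = X),
      IsCartesian p f ∧ p.map f = eqToHom e ≫ φ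

/-- A generalised category with families: fibrations `u : U ⥤ B` and `ut : Ut ⥤ B`, a cartesian
functor `S` ("Σ") over `B` with a right adjoint `D` ("Δ"), such that the unit of the adjunction
is componentwise `ut`-cartesian and the counit is componentwise `u`-cartesian. -/
structure GCwF (B U Ut : Type*) [Category B] [Category U] [Category Ut] where
  u : U ⥤ B
  ut : Ut ⥤ B
  u_fib : IsFibration u
  ut_fib : IsFibration ut
  S : Ut ⥤ U
  D : U ⥤ Ut
  S_over : S ⋙ u = ut
  S_cart : ∀ {a b : Ut} (f : a ⟶ b), IsCartesian ut f → IsCartesian u (S.map f)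
  adj : S ⊣ D
  unit_cart : ∀ a : Ut, IsCartesian ut (adj.unit.app a)
  counit_cart : ∀ A : U, IsCartesian u (adj.counit.app A)

/-!
The unit `η_b : b ⟶ ΔΣb` is cartesian for `Σ ⋙ u`, so a map `g : a ⟶ b` is determined by its
image in `B` together with `g ≫ η_b = η_a ≫ ΔΣg`; both only depend on `Σg`, whence faithfulness.
Conversely, for a compatible `f : Σa ⟶ Σb` the arrow `η_a ≫ Δf` lies over `u f ≫ u(Ση_b)`, so it
lifts through `η_b` to some `g`; then `Σg` and `f` lie over the same arrow and agree after
composing with the `u`-cartesian arrow `Ση_b`, so `Σg = f`.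
-/

theorem IsCartesian.eq_of_map_eq_of_comp_eq {E B : Type*} [Category E] [Category B]
    {p : E ⥤ B} {X Y Z : E} {f : X ⟶ Y} (hf : IsCartesian p f) {l l' : Z ⟶ X}
    (hp : p.map l = p.map l') (hc : l ≫ f = l' ≫ f) : l = l' := by
  obtain ⟨k, -, hk⟩ := hf (l ≫ f) (p.map l) (p.map_comp l f).symm
  exact (hk l ⟨rfl, rfl⟩).trans (hk l' ⟨hp.symm, hc.symm⟩).symm

namespace CategoryTheory.Adjunction

variable {B U Ut : Type*} [Category B] [Category U] [Category Ut] {S : Ut ⥤ U} {D : U ⥤ Ut}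
  (adj : S ⊣ D) {u : U ⥤ B}

theorem faithful_of_isCartesian_unit (hη : ∀ a, IsCartesian (S ⋙ u) (adj.unit.app a)) :
    S.Faithful where
  map_injective {_ b} g g' h := (hη b).eq_of_map_eq_of_comp_eq (by simp [h])
    ((adj.unit_naturality g).symm.trans (h ▸ adj.unit_naturality g'))

theorem exists_map_eq_of_isCartesian_unit (hη : ∀ a, IsCartesian (S ⋙ u) (adj.unit.app a))
    (hSη : ∀ a, IsCartesian u (S.map (adj.unit.app a))) {a b : Ut} (f : S.obj a ⟶ S.obj b)
    (hf : f ≫ S.map (adj.unit.app b) = S.map (adj.unit.app a) ≫ S.map (D.map f)) :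
    ∃ g : a ⟶ b, S.map g = f := by
  have hbase : u.map f ≫ (S ⋙ u).map (adj.unit.app b) =
      (S ⋙ u).map (adj.unit.app a ≫ D.map f) := by
    simp only [Functor.comp_map, ← u.map_comp, S.map_comp, hf]
  obtain ⟨g, hgu, hgη⟩ := (hη b _ _ hbase).exists
  refine ⟨g, (hSη b).eq_of_map_eq_of_comp_eq hgu ?_⟩
  rw [← S.map_comp, hgη, S.map_comp, hf]

end CategoryTheory.Adjunction

/-- in a gcwf the functor `Σ` is faithful, and for objects `a b` of `U̇` it induces
a bijection between `U̇(a, b)` and the set of arrows `f : Σa ⟶ Σb` in `U` satisfying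
`(Ση_b) ∘ f = (ΣΔf) ∘ (Ση_a)`. -/
theorem gcwf_sigma_faithful_and_bijection
    {B U Ut : Type*} [Category B] [Category U] [Category Ut] (G : GCwF B U Ut) :
    (∀ {a b : Ut} (g g' : a ⟶ b), G.S.map g = G.S.map g' → g = g') ∧
    (∀ {a b : Ut} (g : a ⟶ b),
        G.S.map g ≫ G.S.map (G.adj.unit.app b) =
          G.S.map (G.adj.unit.app a) ≫ G.S.map (G.D.map (G.S.map g))) ∧
    (∀ (a b : Ut) (f : G.S.obj a ⟶ G.S.obj b),
        f ≫ G.S.map (G.adj.unit.app b) =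
          G.S.map (G.adj.unit.app a) ≫ G.S.map (G.D.map f) →
        ∃! g : a ⟶ b, G.S.map g = f) := by
  have hη : ∀ a, IsCartesian (G.S ⋙ G.u) (G.adj.unit.app a) := G.S_over ▸ G.unit_cart
  have hSη a : IsCartesian G.u (G.S.map (G.adj.unit.app a)) := G.S_cart _ (G.unit_cart a)
  have := G.adj.faithful_of_isCartesian_unit hη
  refine ⟨fun _ _ h => G.S.map_injective h, fun g => ?_, fun a b f hf => ?_⟩
  · simp only [← G.S.map_comp]
    exact congrArg G.S.map (G.adj.unit_naturality g).symm
  · obtain ⟨g, rfl⟩ := G.adj.exists_map_eq_of_isCartesian_unit hη hSη f hf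
    exact ⟨g, rfl, fun _ h => G.S.map_injective h⟩
end

section
/- Let (u, u̇, Σ ⊣ Δ) be a generalised category with families. Then for every u-cartesian arrow f : A → B in U, the square in B with top u(ε_A) : u̇(ΔA) → uA, left u̇(Δf), right uf, and bottom u(ε_B) is a pullback square. -/
open CategoryTheory

/-! Transposition along `Σ ⊣ Δ` turns maps `Z ⟶ ΔA` over a base map into maps `ΣZ ⟶ A` over
the same base map, and turns `- ≫ Δf` into `- ≫ f`; so cartesianness of `f` says that `Δf` has
unique "transposed" lifts. A cone over the cospan `uf`, `u(ε_{A'})` has its second leg lifted to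
an arrow `g` of `U̇` by the fibration `u̇ = u ∘ Σ`; the transposed lift of `g` is the mediating
map. A second candidate also lifts to `U̇`, and factoring that lift through the cartesian `g`
exhibits it as another transposed lift of the same data, hence equal to the first. -/

theorem isPullback_of_existsUnique {C : Type*} [Category C] {P X Y Z : C}
    {fst : P ⟶ X} {snd : P ⟶ Y} {f : X ⟶ Z} {g : Y ⟶ Z} (w : fst ≫ f = snd ≫ g)
    (h : ∀ {T : C} (a : T ⟶ X) (b : T ⟶ Y), a ≫ f = b ≫ g →
      ∃! l : T ⟶ P, l ≫ fst = a ∧ l ≫ snd = b) :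
    IsPullback fst snd f g := by
  choose lift hlift huniq using fun s : Limits.PullbackCone f g => h s.fst s.snd s.condition
  exact IsPullback.of_isLimit' ⟨w⟩ <| Limits.PullbackCone.IsLimit.mk w lift
    (fun s => (hlift s).1) (fun s => (hlift s).2) (fun s l h₁ h₂ => huniq s l ⟨h₁, h₂⟩)

section

variable {B U Ut : Type*} [Category B] [Category U] [Category Ut]
  {u : U ⥤ B} {S : Ut ⥤ U} {D : U ⥤ Ut} (adj : S ⊣ D)

theorem existsUnique_transpose_lift_of_isCartesian {A A' : U} {f : A ⟶ A'}
    (hf : IsCartesian u f) {Z : Ut} (g : Z ⟶ D.obj A') (h : u.obj (S.obj Z) ⟶ u.obj A)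
    (hh : h ≫ u.map f = u.map (S.map g ≫ adj.counit.app A')) :
    ∃! k : Z ⟶ D.obj A, u.map (S.map k ≫ adj.counit.app A) = h ∧ k ≫ D.map f = g := by
  refine (adj.homEquiv Z A).existsUnique_congr' (fun k => ?_) |>.mp (hf _ h hh)
  rw [← (adj.homEquiv _ _).symm.injective.eq_iff, adj.homEquiv_naturality_right_symm,
    adj.homEquiv_counit, adj.homEquiv_counit]

theorem isPullback_counit_of_isCartesian (hfib : IsFibration (S ⋙ u))
    {A A' : U} {f : A ⟶ A'} (hf : IsCartesian u f) :
    IsPullback (u.map (adj.counit.app A)) (u.map (S.map (D.map f)))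
      (u.map f) (u.map (adj.counit.app A')) := by
  have w : u.map (adj.counit.app A) ≫ u.map f =
      u.map (S.map (D.map f)) ≫ u.map (adj.counit.app A') := by
    rw [← u.map_comp, ← u.map_comp]
    exact congrArg u.map (adj.counit.naturality f).symm
  refine isPullback_of_existsUnique w fun {T} c₁ c₂ hc => ?_
  obtain ⟨Z, g, rfl, hg, hgc₂⟩ := hfib (D.obj A') T c₂
  obtain rfl : u.map (S.map g) = c₂ := by simpa using hgc₂
  obtain ⟨k, hk₁, hk₂⟩ := (existsUnique_transpose_lift_of_isCartesian adj hf g c₁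
    (by rwa [u.map_comp])).exists
  refine ⟨u.map (S.map k),
    ⟨by rw [← u.map_comp, hk₁], by rw [← u.map_comp, ← S.map_comp, hk₂]⟩, ?_⟩
  rintro l ⟨hl₁, hl₂⟩
  obtain ⟨W, m, e, -, hm⟩ := hfib (D.obj A) _ l
  replace hm : u.map (S.map m) = eqToHom e ≫ l := hm
  obtain ⟨n, ⟨hn₁, hn₂⟩, -⟩ := hg (m ≫ D.map f) (eqToHom e)
    (by simp only [Functor.comp_map, ← hl₂, Functor.map_comp, hm, Category.assoc])
  replace hn₁ : u.map (S.map n) = eqToHom e := hn₁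
  have hmn : m = n ≫ k := by
    refine (existsUnique_transpose_lift_of_isCartesian adj hf (m ≫ D.map f) (eqToHom e ≫ c₁)
      ?_).unique ⟨?_, rfl⟩ ⟨?_, by rw [Category.assoc, hk₂, hn₂]⟩
    · simp only [Functor.map_comp, ← hl₁, hm, Category.assoc, w]
    · rw [u.map_comp, hm, Category.assoc, hl₁]
    · rw [S.map_comp, Category.assoc, u.map_comp, hk₁, hn₁]
  rw [← cancel_epi (eqToHom e), ← hm, hmn, S.map_comp, u.map_comp, hn₁]

end

/-- in a gcwf, for every `u`-cartesian arrow `f : A ⟶ A'` in `U`, the square in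
`B` with top `u(ε_A)`, left `u̇(Δf) = u(ΣΔf)`, right `uf`, and bottom `u(ε_{A'})` is a
pullback. -/
theorem gcwf_counit_square_pullback
    {B U Ut : Type*} [Category B] [Category U] [Category Ut] (G : GCwF B U Ut)
    {A A' : U} (f : A ⟶ A') (hf : IsCartesian G.u f) :
    IsPullback (G.u.map (G.adj.counit.app A)) (G.u.map (G.S.map (G.D.map f)))
      (G.u.map f) (G.u.map (G.adj.counit.app A')) :=
  isPullback_counit_of_isCartesian G.adj (G.S_over ▸ G.ut_fib) hf
end

section
/- Let (u, u̇, Σ ⊣ Δ) be a generalised category with families. The comonad ΣΔ on U, with counit ε and comultiplication ΣηΔ, is a weakening and contraction comonad on the fibration u. -/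
open CategoryTheory

/-!
Lift the second leg `b` of a cone over the image of the counit square to a `u̇`-cartesian arrow
`ψ : W ⟶ Δ A'`. Since `f` is cartesian, `Σψ ≫ ε` factors as `g ≫ f` with `g : Σ W ⟶ A` over
the first leg, and the image of `Σ` applied to the transpose `W ⟶ Δ A` of `g` mediates. Any other
mediating arrow lifts to some `χ` into `Δ A`; `χ ≫ Δ f` factors through `ψ`, and cartesianness
of `f` identifies the transposes, which forces uniqueness.
-/

theorem IsCartesian.hom_ext {E B : Type*} [Category E] [Category B] {p : E ⥤ B}
    {X Y Z : E} {f : X ⟶ Y} (hf : IsCartesian p f) {g₁ g₂ : Z ⟶ X}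
    (hp : p.map g₁ = p.map g₂) (h : g₁ ≫ f = g₂ ≫ f) : g₁ = g₂ :=
  (hf (g₂ ≫ f) (p.map g₂) (p.map_comp _ _).symm).unique ⟨hp, h⟩ ⟨rfl, rfl⟩

theorem CategoryTheory.IsPullback.of_forall_existsUnique {C : Type*} [Category C]
    {P X Y Z : C} {fst : P ⟶ X} {snd : P ⟶ Y} {f : X ⟶ Z} {g : Y ⟶ Z}
    (w : fst ≫ f = snd ≫ g)
    (h : ∀ (T : C) (a : T ⟶ X) (b : T ⟶ Y), a ≫ f = b ≫ g →
      ∃! l : T ⟶ P, l ≫ fst = a ∧ l ≫ snd = b) :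
    IsPullback fst snd f g := by
  choose lift hlift huniq using h
  exact .of_isLimit (Limits.PullbackCone.IsLimit.mk w
    (fun s => lift s.pt s.fst s.snd s.condition)
    (fun s => (hlift s.pt s.fst s.snd s.condition).1)
    (fun s => (hlift s.pt s.fst s.snd s.condition).2)
    (fun s m h₁ h₂ => huniq s.pt s.fst s.snd s.condition m ⟨h₁, h₂⟩))

namespace CategoryTheory.Adjunction

variable {B U E : Type*} [Category B] [Category U] [Category E] {p : U ⥤ B}
  {L : E ⥤ U} {R : U ⥤ E} (adj : L ⊣ R) {A A' : U} {f : A ⟶ A'}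

theorem eq_comp_homEquiv_of_isCartesian (hf : IsCartesian p f) {V W : E}
    {ψ : W ⟶ R.obj A'} {g : L.obj W ⟶ A} (hg : g ≫ f = L.map ψ ≫ adj.counit.app A')
    {χ : V ⟶ R.obj A} {w : V ⟶ W} (hχ : χ ≫ R.map f = w ≫ ψ)
    (hp : p.map (L.map χ ≫ adj.counit.app A) = p.map (L.map w ≫ g)) :
    χ = w ≫ adj.homEquiv W A g := by
  rw [← homEquiv_naturality_left, eq_homEquiv_apply, homEquiv_counit]
  refine hf.hom_ext hp ?_
  calc (L.map χ ≫ adj.counit.app A) ≫ f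
      = L.map (χ ≫ R.map f) ≫ adj.counit.app A' := by simp
    _ = (L.map w ≫ g) ≫ f := by rw [hχ, L.map_comp, Category.assoc, Category.assoc, hg]

theorem existsUnique_lift_map_counit_naturality (hfib : IsFibration (L ⋙ p))
    (hf : IsCartesian p f) {W : E} {ψ : W ⟶ R.obj A'} (hψ : IsCartesian (L ⋙ p) ψ) {g : L.obj W ⟶ A}
    (hg : g ≫ f = L.map ψ ≫ adj.counit.app A') :
    ∃! l : p.obj (L.obj W) ⟶ p.obj (L.obj (R.obj A)),
      l ≫ p.map (adj.counit.app A) = p.map g ∧ l ≫ p.map (L.map (R.map f)) = p.map (L.map ψ) := by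
  have htranspose : adj.homEquiv W A g ≫ R.map f = ψ := by
    rw [← homEquiv_naturality_right, hg, homEquiv_apply_eq, homEquiv_counit]
  refine ⟨p.map (L.map (adj.homEquiv W A g)), ⟨?_, ?_⟩, ?_⟩
  · rw [← p.map_comp]
    exact congrArg p.map ((adj.homEquiv W A).symm_apply_apply g)
  · rw [← p.map_comp, ← L.map_comp, htranspose]
  rintro l ⟨hl_counit, hl_map⟩
  obtain ⟨V, χ, e, -, hχ⟩ := hfib _ _ l
  have hχ_base : p.map (L.map χ) = eqToHom e ≫ l := hχ
  obtain ⟨w, ⟨hw, hwψ⟩, -⟩ := hψ (χ ≫ R.map f) (eqToHom e) (by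
    change _ = p.map (L.map (χ ≫ R.map f))
    rw [L.map_comp, p.map_comp, hχ_base, Category.assoc, hl_map]; rfl)
  have hw_base : p.map (L.map w) = eqToHom e := hw
  have hχw : χ = w ≫ adj.homEquiv W A g :=
    adj.eq_comp_homEquiv_of_isCartesian hf hg hwψ.symm (by
      rw [p.map_comp, p.map_comp, hχ_base, hw_base, Category.assoc, hl_counit])
  rw [← cancel_epi (eqToHom e), ← hχ_base, hχw, L.map_comp, p.map_comp, hw_base]

theorem isPullback_map_counit_naturality (hfib : IsFibration (L ⋙ p)) (hf : IsCartesian p f) :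
    IsPullback (p.map (adj.counit.app A)) (p.map (L.map (R.map f)))
      (p.map f) (p.map (adj.counit.app A')) := by
  refine .of_forall_existsUnique (by simp only [← p.map_comp, counit_naturality]) ?_
  intro T a b hab
  obtain ⟨W, ψ, rfl, hψ, hψb⟩ := hfib _ _ b
  obtain rfl : p.map (L.map ψ) = b := by simpa using hψb
  obtain ⟨g, ⟨rfl, hg⟩, -⟩ := hf (L.map ψ ≫ adj.counit.app A') a (by rw [hab, p.map_comp])
  exact adj.existsUnique_lift_map_counit_naturality hfib hf hψ hg

end CategoryTheory.Adjunction

/-- in a gcwf, the comonad `ΣΔ` on `U` induced by the adjunction `Σ ⊣ Δ` (with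
counit `ε` and comultiplication `ΣηΔ`) is a weakening and contraction comonad on the fibration
`u`: its counit components are `u`-cartesian and `u` maps the naturality squares of the counit
at cartesian arrows to pullbacks. -/
theorem gcwf_comonad_is_wccmd
    {B U Ut : Type*} [Category B] [Category U] [Category Ut] (G : GCwF B U Ut) :
    (∀ A : U, IsCartesian G.u (G.adj.toComonad.ε.app A)) ∧
    (∀ {A A' : U} (f : A ⟶ A'), IsCartesian G.u f →
      IsPullback (G.u.map (G.adj.toComonad.ε.app A))
        (G.u.map ((G.adj.toComonad : U ⥤ U).map f)) (G.u.map f)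
        (G.u.map (G.adj.toComonad.ε.app A'))) := by
  have hfib : IsFibration (G.S ⋙ G.u) := G.S_over ▸ G.ut_fib
  exact ⟨G.counit_cart, fun f hf => G.adj.isPullback_map_counit_naturality hfib hf⟩
end

section
/- Let (u, u̇, Σ ⊣ Δ) be a generalised category with families with u̇ cloven. Then the canonical comparison functor M : U̇ → Coalg(ΣΔ), sending a to the coalgebra Ση_a : Σa → ΣΔΣa, is an equivalence of categories; moreover one can choose a quasi-inverse N and natural isomorphisms ζ : NM ≅ Id and ξ : MN ≅ Id forming an adjoint equivalence, with all components of ζ and ξ vertical (lying over identities in B). -/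
open CategoryTheory

/-!
A coalgebra `α : A ⟶ ΣΔA` is sent to the domain `N α` of a chosen `u̇`-cartesian lift
`k : N α ⟶ ΔA` of `u α`. The composite `Σk ≫ ε_A` is `u`-cartesian (Σ preserves cartesian
arrows and `ε` is cartesian) and lies over `u (α ≫ ε_A) = 𝟙`, so it is a vertical isomorphism;
the counit law alone makes it a coalgebra map, which gives `ξ`. At the coalgebra `Σ η_a`, the
lift `k` factors through the cartesian arrow `η_a` by a vertical map, which is again cartesian,
hence invertible: this is `ζ_a`. Each remaining identity is checked after composing with a
cartesian arrow, where it reduces to a triangle identity of `Σ ⊣ Δ`.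
-/

section Fibrations

variable {E B : Type*} [Category E] [Category B] {p : E ⥤ B}

theorem IsCartesian.isStronglyCartesian {R S : B} {X Y : E} {b : R ⟶ S} {f : X ⟶ Y}
    (hf : IsCartesian p f) [p.IsHomLift b f] : p.IsStronglyCartesian b f := by
  subst_hom_lift p b f
  refine ⟨fun {Z} g φ _ => ?_⟩
  obtain ⟨l, ⟨rfl, hl⟩, huniq⟩ := hf φ g (IsHomLift.eq_of_isHomLift p (g ≫ p.map f) φ)
  exact ⟨l, ⟨inferInstance, hl⟩, fun l' ⟨_, hl'⟩ =>
    huniq l' ⟨(IsHomLift.eq_of_isHomLift p _ l').symm, hl'⟩⟩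

theorem IsFibration.exists_isCartesian_isHomLift (hp : IsFibration p) {R T : B} (b : R ⟶ T)
    (Y : E) (hY : p.obj Y = T) : ∃ (X : E) (f : X ⟶ Y), IsCartesian p f ∧ p.IsHomLift b f := by
  subst hY
  obtain ⟨X, f, rfl, hf, hb⟩ := hp Y R b
  obtain rfl : b = p.map f := by simpa using hb.symm
  exact ⟨X, f, hf, inferInstance⟩

theorem CategoryTheory.IsHomLift.exists_map_eq_eqToHom {R : B} {X Y : E} (f : X ⟶ Y)
    [p.IsHomLift (𝟙 R) f] : ∃ e : p.obj X = p.obj Y, p.map f = eqToHom e :=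
  ⟨(IsHomLift.domain_eq p (𝟙 R) f).trans (IsHomLift.codomain_eq p (𝟙 R) f).symm,
    by simp [IsHomLift.fac' p (𝟙 R) f]⟩

theorem CategoryTheory.IsHomLift.eqToHom_of_id {R R' : B} {X Y : E} (f : X ⟶ Y) (e : R = R')
    [p.IsHomLift (𝟙 R) f] : p.IsHomLift (eqToHom e) f := by
  subst e
  simpa

end Fibrations

namespace GCwF

variable {B U Ut : Type*} [Category B] [Category U] [Category Ut] (G : GCwF B U Ut)

instance isHomLift_u_map_S_map {a b : Ut} (f : a ⟶ b) :
    G.ut.IsHomLift (G.u.map (G.S.map f)) f := by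
  obtain ⟨u, _, -, -, S, -, rfl, -⟩ := G
  exact IsHomLift.map (S ⋙ u) f

instance isHomLift_S_map {R T : B} {a b : Ut} (r : R ⟶ T) (f : a ⟶ b)
    [hr : G.ut.IsHomLift r f] : G.u.IsHomLift r (G.S.map f) := by
  revert hr
  obtain ⟨u, _, -, -, S, -, rfl, -⟩ := G
  rintro ⟨⟩
  exact IsHomLift.map u _

theorem isStronglyCartesian_S_map {R T : B} {a b : Ut} (r : R ⟶ T) {f : a ⟶ b}
    (hf : IsCartesian G.ut f) [G.ut.IsHomLift r f] : G.u.IsStronglyCartesian r (G.S.map f) :=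
  (G.S_cart f hf).isStronglyCartesian

/- `η`, `ε`, `structMap` and `cartLiftComparison` are existing morphisms with their
(co)domains written as `Σ a`, `Δ A`: the comonad's `T.obj A` and the comparison functor's objects
are only semireducibly of this form, which instance search for lifts does not see through. -/
abbrev η (a : Ut) : a ⟶ G.D.obj (G.S.obj a) := G.adj.unit.app a

abbrev ε (A : U) : G.S.obj (G.D.obj A) ⟶ A := G.adj.counit.app A

instance isStronglyCartesian_unit (a : Ut) :
    G.ut.IsStronglyCartesian (G.u.map (G.S.map (G.η a))) (G.η a) :=
  (G.unit_cart a).isStronglyCartesian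

instance isStronglyCartesian_counit (A : U) :
    G.u.IsStronglyCartesian (G.u.map (G.ε A)) (G.ε A) :=
  (G.counit_cart A).isStronglyCartesian

section Coalgebra

variable (h : G.adj.toComonad.Coalgebra)

abbrev structMap : h.A ⟶ G.S.obj (G.D.obj h.A) := h.a

theorem structMap_comp_counit : G.structMap h ≫ G.ε h.A = 𝟙 h.A := h.counit

theorem exists_cartLift : ∃ (X : Ut) (k : X ⟶ G.D.obj h.A),
    IsCartesian G.ut k ∧ G.ut.IsHomLift (G.u.map (G.structMap h)) k :=
  G.ut_fib.exists_isCartesian_isHomLift _ _ (Functor.congr_obj G.S_over _).symm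

noncomputable def cartLiftObj : Ut := (G.exists_cartLift h).choose

noncomputable def cartLift : G.cartLiftObj h ⟶ G.D.obj h.A :=
  (G.exists_cartLift h).choose_spec.choose

theorem cartLift_isCartesian : IsCartesian G.ut (G.cartLift h) :=
  (G.exists_cartLift h).choose_spec.choose_spec.1

instance isHomLift_cartLift : G.ut.IsHomLift (G.u.map (G.structMap h)) (G.cartLift h) :=
  (G.exists_cartLift h).choose_spec.choose_spec.2

instance isStronglyCartesian_cartLift :
    G.ut.IsStronglyCartesian (G.u.map (G.structMap h)) (G.cartLift h) :=
  (G.cartLift_isCartesian h).isStronglyCartesian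

noncomputable def counitHom : G.S.obj (G.cartLiftObj h) ⟶ h.A :=
  G.S.map (G.cartLift h) ≫ G.ε h.A

instance isStronglyCartesian_counitHom :
    G.u.IsStronglyCartesian (𝟙 (G.u.obj h.A)) (G.counitHom h) := by
  have := G.isStronglyCartesian_S_map (G.u.map (G.structMap h)) (G.cartLift_isCartesian h)
  have := Functor.IsStronglyCartesian.comp G.u (f := G.u.map (G.structMap h))
    (g := G.u.map (G.ε h.A)) (φ := G.S.map (G.cartLift h)) (ψ := G.ε h.A)
  rwa [← G.u.map_comp, structMap_comp_counit, G.u.map_id] at this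

instance isIso_counitHom : IsIso (G.counitHom h) :=
  Functor.IsStronglyCartesian.isIso_of_base_isIso G.u (𝟙 (G.u.obj h.A)) (G.counitHom h)

theorem unit_comp_D_map_counitHom :
    G.η (G.cartLiftObj h) ≫ G.D.map (G.counitHom h) = G.cartLift h := by
  simp [counitHom]

theorem S_map_cartLift : G.S.map (G.cartLift h) = G.counitHom h ≫ G.structMap h := by
  refine Functor.IsStronglyCartesian.ext G.u (G.u.map (G.ε h.A)) (G.ε h.A)
    (G.u.map (G.structMap h)) ?_
  rw [Category.assoc, structMap_comp_counit, Category.comp_id, counitHom]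

end Coalgebra

theorem u_map_structMap_comp {h h' : G.adj.toComonad.Coalgebra} (f : h ⟶ h') :
    G.u.map (G.structMap h) ≫ G.u.map (G.S.map (G.D.map f.f)) =
      G.u.map f.f ≫ G.u.map (G.structMap h') := by
  rw [← G.u.map_comp, ← G.u.map_comp]
  exact congrArg G.u.map f.h

noncomputable def comparisonInvMap {h h' : G.adj.toComonad.Coalgebra} (f : h ⟶ h') :
    G.cartLiftObj h ⟶ G.cartLiftObj h' :=
  Functor.IsStronglyCartesian.map G.ut (G.u.map (G.structMap h')) (G.cartLift h')
    (G.u_map_structMap_comp f) (G.cartLift h ≫ G.D.map f.f)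

instance isHomLift_comparisonInvMap {h h' : G.adj.toComonad.Coalgebra} (f : h ⟶ h') :
    G.ut.IsHomLift (G.u.map f.f) (G.comparisonInvMap f) := by
  unfold comparisonInvMap
  infer_instance

theorem comparisonInvMap_comp_cartLift {h h' : G.adj.toComonad.Coalgebra} (f : h ⟶ h') :
    G.comparisonInvMap f ≫ G.cartLift h' = G.cartLift h ≫ G.D.map f.f :=
  Functor.IsStronglyCartesian.fac _ _ _ _ _

noncomputable def comparisonInv : G.adj.toComonad.Coalgebra ⥤ Ut where
  obj := G.cartLiftObj
  map := G.comparisonInvMap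
  map_id h := by
    have := G.isHomLift_comparisonInvMap (𝟙 h)
    rw [Comonad.Coalgebra.id_f, G.u.map_id] at this
    have : G.ut.IsHomLift (𝟙 (G.u.obj h.A)) (𝟙 (G.cartLiftObj h)) :=
      IsHomLift.id (IsHomLift.domain_eq G.ut (G.u.map (G.structMap h)) (G.cartLift h))
    exact Functor.IsStronglyCartesian.ext G.ut (G.u.map (G.structMap h)) (G.cartLift h)
      (𝟙 (G.u.obj h.A)) (by simp [comparisonInvMap_comp_cartLift])
  map_comp {h h' h''} f g := by
    have := G.isHomLift_comparisonInvMap (f ≫ g)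
    rw [Comonad.Coalgebra.comp_f, G.u.map_comp] at this
    refine Functor.IsStronglyCartesian.ext G.ut (G.u.map (G.structMap h'')) (G.cartLift h'')
      (G.u.map f.f ≫ G.u.map g.f) ?_
    rw [comparisonInvMap_comp_cartLift, Category.assoc, comparisonInvMap_comp_cartLift,
      ← Category.assoc, comparisonInvMap_comp_cartLift, Category.assoc, Comonad.Coalgebra.comp_f,
      G.D.map_comp]

noncomputable abbrev cartLiftComparison (a : Ut) :
    G.cartLiftObj ((Comonad.comparison G.adj).obj a) ⟶ G.D.obj (G.S.obj a) :=
  G.cartLift ((Comonad.comparison G.adj).obj a)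

instance isStronglyCartesian_cartLiftComparison (a : Ut) :
    G.ut.IsStronglyCartesian (G.u.map (G.S.map (G.η a))) (G.cartLiftComparison a) :=
  G.isStronglyCartesian_cartLift ((Comonad.comparison G.adj).obj a)

noncomputable def unitHom (a : Ut) : G.cartLiftObj ((Comonad.comparison G.adj).obj a) ⟶ a :=
  Functor.IsStronglyCartesian.map G.ut (G.u.map (G.S.map (G.η a))) (G.η a)
    (g := 𝟙 (G.u.obj (G.S.obj a))) (Category.id_comp _).symm
    (G.cartLiftComparison a)

instance isHomLift_unitHom (a : Ut) :
    G.ut.IsHomLift (𝟙 (G.u.obj (G.S.obj a))) (G.unitHom a) := by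
  unfold unitHom
  infer_instance

theorem unitHom_comp_η (a : Ut) :
    G.unitHom a ≫ G.η a = G.cartLiftComparison a := by
  unfold unitHom
  exact Functor.IsStronglyCartesian.fac _ _ _ _ _

instance isIso_unitHom (a : Ut) : IsIso (G.unitHom a) := by
  have : G.ut.IsStronglyCartesian (𝟙 _ ≫ G.u.map (G.S.map (G.η a))) (G.unitHom a ≫ G.η a) := by
    rw [Category.id_comp, unitHom_comp_η]
    infer_instance
  have := Functor.IsStronglyCartesian.of_comp G.ut (f := 𝟙 (G.u.obj (G.S.obj a)))
    (g := G.u.map (G.S.map (G.η a))) (φ := G.unitHom a) (ψ := G.η a)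
  exact Functor.IsStronglyCartesian.isIso_of_base_isIso G.ut (𝟙 (G.u.obj (G.S.obj a))) _

theorem unitHom_naturality {a b : Ut} (g : a ⟶ b) :
    G.comparisonInvMap ((Comonad.comparison G.adj).map g) ≫ G.unitHom b = G.unitHom a ≫ g := by
  have : G.ut.IsHomLift (G.u.map (G.S.map g))
      (G.comparisonInvMap ((Comonad.comparison G.adj).map g)) :=
    G.isHomLift_comparisonInvMap ((Comonad.comparison G.adj).map g)
  refine Functor.IsStronglyCartesian.ext G.ut (G.u.map (G.S.map (G.η b))) (G.η b)
    (G.u.map (G.S.map g)) ?_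
  calc (G.comparisonInvMap ((Comonad.comparison G.adj).map g) ≫ G.unitHom b) ≫ G.η b
      _ = G.comparisonInvMap ((Comonad.comparison G.adj).map g) ≫ G.cartLiftComparison b := by
          rw [Category.assoc, unitHom_comp_η]
      _ = G.cartLiftComparison a ≫ G.D.map (G.S.map g) :=
          G.comparisonInvMap_comp_cartLift _
      _ = (G.unitHom a ≫ g) ≫ G.η b := by
          rw [Category.assoc, ← G.adj.unit_naturality g, ← Category.assoc, unitHom_comp_η]

noncomputable def counitIsoApp (h : G.adj.toComonad.Coalgebra) :
    (Comonad.comparison G.adj).obj (G.cartLiftObj h) ≅ h :=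
  Comonad.Coalgebra.isoMk (asIso (G.counitHom h) :) <|
    (G.S.map_comp _ _).symm.trans
      ((congrArg G.S.map (G.unit_comp_D_map_counitHom h)).trans (G.S_map_cartLift h))

theorem counitHom_naturality {h h' : G.adj.toComonad.Coalgebra} (f : h ⟶ h') :
    G.S.map (G.comparisonInvMap f) ≫ G.counitHom h' = G.counitHom h ≫ f.f := by
  rw [counitHom, counitHom, ← G.S.map_comp_assoc, comparisonInvMap_comp_cartLift, G.S.map_comp,
    Category.assoc, Category.assoc]
  exact congrArg _ (G.adj.counit.naturality f.f)

theorem S_map_unitHom (a : Ut) :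
    G.S.map (G.unitHom a) = G.counitHom ((Comonad.comparison G.adj).obj a) := by
  calc G.S.map (G.unitHom a)
      _ = G.S.map (G.unitHom a) ≫ G.S.map (G.η a) ≫ G.ε (G.S.obj a) := by simp
      _ = G.S.map (G.unitHom a ≫ G.η a) ≫ G.ε (G.S.obj a) := by rw [G.S.map_comp_assoc]
      _ = _ := by rw [unitHom_comp_η]; rfl

theorem comparisonInvMap_counitIsoApp_hom (h : G.adj.toComonad.Coalgebra) :
    G.comparisonInvMap (G.counitIsoApp h).hom = G.unitHom (G.cartLiftObj h) := by
  obtain ⟨e, he⟩ :=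
    IsHomLift.exists_map_eq_eqToHom (p := G.u) (R := G.u.obj h.A) (G.counitHom h)
  have := G.isHomLift_comparisonInvMap (G.counitIsoApp h).hom
  change G.ut.IsHomLift (G.u.map (G.counitHom h)) _ at this
  rw [he] at this
  have := IsHomLift.eqToHom_of_id (p := G.ut) (G.unitHom (G.cartLiftObj h)) e
  refine Functor.IsStronglyCartesian.ext G.ut (G.u.map (G.structMap h)) (G.cartLift h)
    (eqToHom e) ?_
  calc G.comparisonInvMap (G.counitIsoApp h).hom ≫ G.cartLift h
      _ = G.cartLiftComparison _ ≫ G.D.map (G.counitHom h) := G.comparisonInvMap_comp_cartLift _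
      _ = G.unitHom (G.cartLiftObj h) ≫ G.η _ ≫ G.D.map (G.counitHom h) := by
          rw [← unitHom_comp_η, Category.assoc]
      _ = G.unitHom (G.cartLiftObj h) ≫ G.cartLift h := by rw [unit_comp_D_map_counitHom]

noncomputable def comparisonCompInvIso : Comonad.comparison G.adj ⋙ G.comparisonInv ≅ 𝟭 Ut :=
  NatIso.ofComponents (fun a => (asIso (G.unitHom a) :)) G.unitHom_naturality

noncomputable def invCompComparisonIso :
    G.comparisonInv ⋙ Comonad.comparison G.adj ≅ 𝟭 G.adj.toComonad.Coalgebra :=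
  NatIso.ofComponents G.counitIsoApp fun f => by
    ext
    exact G.counitHom_naturality f

end GCwF

/-- in a gcwf (the fibration `u̇` being cloven, which is automatic here since
`IsFibration` asserts the existence of cartesian lifts), the canonical comparison functor
`M : U̇ ⥤ Coalg(ΣΔ)`, sending `a` to the coalgebra `Ση_a : Σa ⟶ ΣΔΣa`, is an equivalence:
there are a quasi-inverse `N` and natural isomorphisms `ζ : NM ≅ Id` and `ξ : MN ≅ Id` forming
an adjoint equivalence, all of whose components are vertical (lie over identities in `B`). -/
theorem gcwf_comparison_equivalence
    {B U Ut : Type*} [Category B] [Category U] [Category Ut] (G : GCwF B U Ut) :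
    ∃ (N : G.adj.toComonad.Coalgebra ⥤ Ut)
      (ζ : Comonad.comparison G.adj ⋙ N ≅ 𝟭 Ut)
      (ξ : N ⋙ Comonad.comparison G.adj ≅ 𝟭 G.adj.toComonad.Coalgebra),
      (∀ a : Ut, (Comonad.comparison G.adj).map (ζ.hom.app a) =
          ξ.hom.app ((Comonad.comparison G.adj).obj a)) ∧
      (∀ h : G.adj.toComonad.Coalgebra, N.map (ξ.hom.app h) = ζ.hom.app (N.obj h)) ∧
      (∀ a : Ut, ∃ e : G.ut.obj (N.obj ((Comonad.comparison G.adj).obj a)) = G.ut.obj a,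
          G.ut.map (ζ.hom.app a) = eqToHom e) ∧
      (∀ h : G.adj.toComonad.Coalgebra,
          ∃ e : (G.adj.toComonad.forget ⋙ G.u).obj
                  ((Comonad.comparison G.adj).obj (N.obj h)) =
                (G.adj.toComonad.forget ⋙ G.u).obj h,
          (G.adj.toComonad.forget ⋙ G.u).map (ξ.hom.app h) = eqToHom e) :=
  ⟨G.comparisonInv, G.comparisonCompInvIso, G.invCompComparisonIso,
    fun a => Comonad.Coalgebra.Hom.ext (G.S_map_unitHom a),
    G.comparisonInvMap_counitIsoApp_hom,
    fun a => IsHomLift.exists_map_eq_eqToHom (R := G.u.obj (G.S.obj a)) (G.unitHom a),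
    fun h => IsHomLift.exists_map_eq_eqToHom (R := G.u.obj h.A) (G.counitHom h)⟩
end
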